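/- arXiv:2510.14009 — 2 statements merged into one kernel-verified Lean document; each statement's English description precedes it below -/
import Mathlib

section
/- Under the layer-wise setup, let f : E → ℝ be differentiable, layer-wise L-smooth, and bounded below with f* := inf f > −∞. Let X₁, …, X_{T+1} ∈ E be generated by X_{t+1}^ℓ = X_t^ℓ + η_t^ℓ·O_t^ℓ for t = 1,…,T, where η_t^ℓ ≥ 0, ‖O_t^ℓ‖_{(ℓ)} ≤ 1, and ⟨B_t^ℓ, O_t^ℓ⟩ = −‖B_t^ℓ‖_{(ℓ)*} for some B_t^ℓ ∈ E_ℓ. Then Σ_{t=1}^{T} Σ_{ℓ=1}^{p} η_t^ℓ·‖∇_ℓ f(X_t)‖_{(ℓ)*} ≤ f(X₁) − f* + Σ_{t=1}^{T} Σ_{ℓ=1}^{p} ( 2·η_t^ℓ·‖B_t^ℓ − ∇_ℓ f(X_t)‖_{(ℓ)*} + (L_ℓ/2)·(η_t^ℓ)² ). -/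
/-!
Layer-wise smoothness gives the descent inequality
`f (X + Δ) ≤ f X + ⟪∇f X, Δ⟫ + ∑ ℓ, L ℓ / 2 * N ℓ (Δ ℓ) ^ 2`, by comparing `f` on the segment
`X + sΔ` with a parabola. For the step `Δ ℓ = η ℓ • O ℓ`, the oracle property of `O ℓ` and the
triangle inequality for the dual norm give
`⟪∇_ℓ f X, O ℓ⟫ ≤ -‖∇_ℓ f X‖_* + 2 ‖B ℓ - ∇_ℓ f X‖_*`. Summing the resulting one-step bounds
telescopes the values of `f`, and `f (X (T + 1)) ≥ f*`.
-/

open scoped RealInnerProductSpace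

/-- The dual norm of a (semi)norm `N` on a real inner product space:
`‖Y‖_* = sup { ⟪Y, X⟫ : N X ≤ 1 }`. -/
noncomputable def dualNorm {E : Type*} [NormedAddCommGroup E] [InnerProductSpace ℝ E]
    (N : E → ℝ) (Y : E) : ℝ :=
  sSup ((fun X => ⟪Y, X⟫) '' {X | N X ≤ 1})

namespace Seminorm

variable {F : Type*} [NormedAddCommGroup F] [InnerProductSpace ℝ F] [FiniteDimensional ℝ F]

theorem continuous_of_finiteDimensional (N : Seminorm ℝ F) : Continuous N :=
  continuousOn_univ.mp (N.convexOn.continuousOn isOpen_univ)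

theorem exists_pos_mul_norm_le (N : Seminorm ℝ F) (hN : ∀ x, N x = 0 → x = 0) :
    ∃ c, 0 < c ∧ ∀ x, c * ‖x‖ ≤ N x := by
  rcases subsingleton_or_nontrivial F with hF | hF
  · exact ⟨1, one_pos, fun x => by simp [Subsingleton.elim x 0]⟩
  obtain ⟨x₀, hx₀, hmin⟩ := (isCompact_sphere (0 : F) 1).exists_isMinOn
    (NormedSpace.sphere_nonempty.mpr zero_le_one) N.continuous_of_finiteDimensional.continuousOn
  have hx₀ : ‖x₀‖ = 1 := by simpa using hx₀
  have hpos : 0 < N x₀ :=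
    (apply_nonneg N x₀).lt_of_ne fun h => by simp [hN x₀ h.symm] at hx₀
  refine ⟨N x₀, hpos, fun x => ?_⟩
  rcases eq_or_ne x 0 with rfl | hx
  · simp
  have hxpos : 0 < ‖x‖ := norm_pos_iff.mpr hx
  have hunit : ‖x‖⁻¹ • x ∈ Metric.sphere (0 : F) 1 := by
    simp [norm_smul, hxpos.ne']
  have := isMinOn_iff.mp hmin _ hunit
  rw [map_smul_eq_mul, Real.norm_of_nonneg (inv_nonneg.mpr hxpos.le),
    le_inv_mul_iff₀ hxpos] at this
  linarith [mul_comm (N x₀) ‖x‖]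

end Seminorm

section DualNorm

variable {F : Type*} [NormedAddCommGroup F] [InnerProductSpace ℝ F]

theorem dualNorm_le (N : Seminorm ℝ F) {Y : F} {r : ℝ} (h : ∀ X, N X ≤ 1 → ⟪Y, X⟫ ≤ r) :
    dualNorm N Y ≤ r :=
  csSup_le ⟨_, 0, by simp, rfl⟩ (by rintro _ ⟨X, hX, rfl⟩; exact h X hX)

theorem dualNorm_neg (N : Seminorm ℝ F) (Y : F) : dualNorm N (-Y) = dualNorm N Y := by
  unfold dualNorm
  congr 1
  ext r
  constructor <;>
  · rintro ⟨X, hX, rfl⟩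
    exact ⟨-X, by simpa using hX, by simp⟩

theorem dualNorm_sub_comm (N : Seminorm ℝ F) (Y Z : F) :
    dualNorm N (Y - Z) = dualNorm N (Z - Y) := by
  rw [← dualNorm_neg, neg_sub]

variable [FiniteDimensional ℝ F] (N : Seminorm ℝ F) (hN : ∀ x, N x = 0 → x = 0)
include hN

theorem bddAbove_inner_unitBall (Y : F) : BddAbove ((fun X => ⟪Y, X⟫) '' {X | N X ≤ 1}) := by
  obtain ⟨c, hc, hcN⟩ := N.exists_pos_mul_norm_le hN
  refine ⟨‖Y‖ * c⁻¹, ?_⟩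
  rintro _ ⟨X, hX, rfl⟩
  have hXc : ‖X‖ ≤ c⁻¹ := by
    rw [← one_div, le_div_iff₀' hc]; exact (hcN X).trans hX
  exact (real_inner_le_norm Y X).trans (by gcongr)

theorem inner_le_dualNorm {X : F} (hX : N X ≤ 1) (Y : F) : ⟪Y, X⟫ ≤ dualNorm N Y :=
  le_csSup (bddAbove_inner_unitBall N hN Y) ⟨X, hX, rfl⟩

theorem inner_le_dualNorm_mul (Y X : F) : ⟪Y, X⟫ ≤ dualNorm N Y * N X := by
  rcases (apply_nonneg N X).eq_or_lt with h | h
  · simp [hN X h.symm]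
  have hunit : N ((N X)⁻¹ • X) ≤ 1 := by
    rw [map_smul_eq_mul, Real.norm_of_nonneg (inv_nonneg.mpr h.le), inv_mul_cancel₀ h.ne']
  have := inner_le_dualNorm N hN hunit Y
  rwa [real_inner_smul_right, inv_mul_le_iff₀ h, mul_comm] at this

theorem dualNorm_add_le (Y Z : F) : dualNorm N (Y + Z) ≤ dualNorm N Y + dualNorm N Z :=
  dualNorm_le N fun X hX => by
    rw [inner_add_left]
    exact add_le_add (inner_le_dualNorm N hN hX Y) (inner_le_dualNorm N hN hX Z)

/-- `o` is the linear minimization oracle's answer at `b`; it remains a descent direction for any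
`g` close to `b` in dual norm. -/
theorem inner_le_of_lmo {g b o : F} (ho : N o ≤ 1) (hlmo : ⟪b, o⟫ = -dualNorm N b) :
    ⟪g, o⟫ ≤ -dualNorm N g + 2 * dualNorm N (b - g) := by
  have hsplit : ⟪g, o⟫ = ⟪b, o⟫ + ⟪g - b, o⟫ := by rw [inner_sub_left]; ring
  have herr := inner_le_dualNorm N hN ho (g - b)
  have htri : dualNorm N g ≤ dualNorm N b + dualNorm N (g - b) := by
    simpa using dualNorm_add_le N hN b (g - b)
  rw [dualNorm_sub_comm] at herr htri
  linarith

end DualNorm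

theorem le_add_inner_gradient_add_of_inner_gradient_sub_le {H : Type*} [NormedAddCommGroup H]
    [InnerProductSpace ℝ H] [CompleteSpace H] {f : H → ℝ} (hf : Differentiable ℝ f) (x d : H)
    {C : ℝ} (hC : ∀ s ∈ Set.Ioo (0 : ℝ) 1, ⟪gradient f (x + s • d) - gradient f x, d⟫ ≤ s * C) :
    f (x + d) ≤ f x + ⟪gradient f x, d⟫ + C / 2 := by
  set G := ⟪gradient f x, d⟫
  set φ : ℝ → ℝ := fun s => f (x + s • d) - s * G - s ^ 2 * (C / 2)
  have hφ : ∀ s : ℝ, HasDerivAt φ (⟪gradient f (x + s • d), d⟫ - G - s * C) s := by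
    intro s
    have hline : HasDerivAt (fun s : ℝ => x + s • d) d s := by
      simpa using ((hasDerivAt_id s).smul_const d).const_add x
    have hfline : HasDerivAt (fun s : ℝ => f (x + s • d)) ⟪gradient f (x + s • d), d⟫ s := by
      simpa [Function.comp_def] using
        (hf (x + s • d)).hasGradientAt.hasFDerivAt.comp_hasDerivAt s hline
    exact ((hfline.sub (hasDerivAt_mul_const G)).sub
      ((hasDerivAt_pow 2 s).mul_const (C / 2))).congr_deriv (by norm_num; ring)
  have hanti : AntitoneOn φ (Set.Icc 0 1) := by
    refine antitoneOn_of_deriv_nonpos (convex_Icc 0 1)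
      (fun s _ => (hφ s).continuousAt.continuousWithinAt)
      (fun s _ => (hφ s).differentiableAt.differentiableWithinAt) fun s hs => ?_
    rw [interior_Icc] at hs
    rw [(hφ s).deriv, ← inner_sub_left]
    linarith [hC s hs]
  have := hanti (by simp) (by simp) zero_le_one
  norm_num [φ] at this
  linarith

section Layerwise

variable {ι : Type*} [Fintype ι] {E : ι → Type*} [∀ ℓ, NormedAddCommGroup (E ℓ)]
  [∀ ℓ, InnerProductSpace ℝ (E ℓ)] [∀ ℓ, FiniteDimensional ℝ (E ℓ)]

def LayerwiseSmooth (N : ∀ ℓ, Seminorm ℝ (E ℓ)) (L : ι → ℝ) (f : PiLp 2 E → ℝ) : Prop :=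
  ∀ ℓ (X Y : PiLp 2 E), dualNorm (N ℓ) (gradient f X ℓ - gradient f Y ℓ) ≤ L ℓ * N ℓ (X ℓ - Y ℓ)

variable {N : ∀ ℓ, Seminorm ℝ (E ℓ)} (hN : ∀ ℓ x, N ℓ x = 0 → x = 0)
include hN

theorem PiLp.inner_le_sum_dualNorm_mul (G Δ : PiLp 2 E) :
    ⟪G, Δ⟫ ≤ ∑ ℓ, dualNorm (N ℓ) (G ℓ) * N ℓ (Δ ℓ) := by
  rw [PiLp.inner_apply]
  exact Finset.sum_le_sum fun ℓ _ => inner_le_dualNorm_mul (N ℓ) (hN ℓ) _ _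

variable {L : ι → ℝ} {f : PiLp 2 E → ℝ}

theorem LayerwiseSmooth.le_add_inner_add_sum (hsmooth : LayerwiseSmooth N L f)
    (hf : Differentiable ℝ f) (X Δ : PiLp 2 E) :
    f (X + Δ) ≤ f X + ⟪gradient f X, Δ⟫ + ∑ ℓ, L ℓ / 2 * N ℓ (Δ ℓ) ^ 2 := by
  refine (le_add_inner_gradient_add_of_inner_gradient_sub_le hf X Δ
    (C := ∑ ℓ, L ℓ * N ℓ (Δ ℓ) ^ 2) fun s hs => ?_).trans_eq
      (by rw [Finset.sum_div]; congr! 2; ring)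
  calc ⟪gradient f (X + s • Δ) - gradient f X, Δ⟫
      ≤ ∑ ℓ, dualNorm (N ℓ) (gradient f (X + s • Δ) ℓ - gradient f X ℓ) * N ℓ (Δ ℓ) :=
        PiLp.inner_le_sum_dualNorm_mul hN _ _
    _ ≤ ∑ ℓ, L ℓ * N ℓ ((X + s • Δ) ℓ - X ℓ) * N ℓ (Δ ℓ) :=
        Finset.sum_le_sum fun ℓ _ => mul_le_mul_of_nonneg_right (hsmooth ℓ _ _) (apply_nonneg _ _)
    _ = s * ∑ ℓ, L ℓ * N ℓ (Δ ℓ) ^ 2 := by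
        simp only [PiLp.add_apply, PiLp.smul_apply, add_sub_cancel_left, map_smul_eq_mul,
          Real.norm_of_nonneg hs.1.le, Finset.mul_sum]
        congr! 1 with ℓ
        ring

theorem LayerwiseSmooth.lmo_step (hsmooth : LayerwiseSmooth N L f) (hf : Differentiable ℝ f)
    (hL : ∀ ℓ, 0 ≤ L ℓ) {X X' : PiLp 2 E} {B O : ∀ ℓ, E ℓ} {η : ι → ℝ} (hη : ∀ ℓ, 0 ≤ η ℓ)
    (hO_ball : ∀ ℓ, N ℓ (O ℓ) ≤ 1) (hO_lmo : ∀ ℓ, ⟪B ℓ, O ℓ⟫ = -dualNorm (N ℓ) (B ℓ))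
    (hX' : ∀ ℓ, X' ℓ = X ℓ + η ℓ • O ℓ) :
    ∑ ℓ, η ℓ * dualNorm (N ℓ) (gradient f X ℓ) ≤ f X - f X' + ∑ ℓ,
      (2 * η ℓ * dualNorm (N ℓ) (B ℓ - gradient f X ℓ) + L ℓ / 2 * η ℓ ^ 2) := by
  have hdesc := hsmooth.le_add_inner_add_sum hN hf X (X' - X)
  rw [add_sub_cancel, PiLp.inner_apply, add_assoc, ← Finset.sum_add_distrib] at hdesc
  have hlayer : ∀ ℓ, ⟪gradient f X ℓ, (X' - X) ℓ⟫ + L ℓ / 2 * N ℓ ((X' - X) ℓ) ^ 2 ≤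
      (2 * η ℓ * dualNorm (N ℓ) (B ℓ - gradient f X ℓ) + L ℓ / 2 * η ℓ ^ 2)
        - η ℓ * dualNorm (N ℓ) (gradient f X ℓ) := by
    intro ℓ
    have hΔ : (X' - X) ℓ = η ℓ • O ℓ := by rw [PiLp.sub_apply, hX', add_sub_cancel_left]
    have hdir := mul_le_mul_of_nonneg_left
      (inner_le_of_lmo (N ℓ) (hN ℓ) (g := gradient f X ℓ) (hO_ball ℓ) (hO_lmo ℓ)) (hη ℓ)
    have hstep : (η ℓ * N ℓ (O ℓ)) ^ 2 ≤ η ℓ ^ 2 :=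
      pow_le_pow_left₀ (mul_nonneg (hη ℓ) (apply_nonneg _ _))
        (mul_le_of_le_one_right (hη ℓ) (hO_ball ℓ)) 2
    rw [hΔ, real_inner_smul_right, map_smul_eq_mul, Real.norm_of_nonneg (hη ℓ)]
    nlinarith [hL ℓ]
  have := Finset.sum_le_sum fun ℓ (_ : ℓ ∈ Finset.univ) => hlayer ℓ
  rw [Finset.sum_sub_distrib] at this
  linarith

end Layerwise

theorem Finset.sum_Icc_le_sub_add_sum_of_le {M : Type*} [AddCommGroup M] [PartialOrder M]
    [IsOrderedAddMonoid M] {a c u : ℕ → M} {T : ℕ}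
    (h : ∀ t ∈ Finset.Icc 1 T, a t ≤ u t - u (t + 1) + c t) :
    ∑ t ∈ Finset.Icc 1 T, a t ≤ u 1 - u (T + 1) + ∑ t ∈ Finset.Icc 1 T, c t := by
  refine (Finset.sum_le_sum h).trans_eq ?_
  rw [Finset.sum_add_distrib]
  congr 1
  rcases T with _ | T
  · simp
  rw [← neg_sub, ← Finset.sum_Icc_sub (by omega), ← Finset.sum_neg_distrib]
  simp

/-- Telescoped descent lemma for LMO-based layer-wise updates over
`t = 1, …, T`, for an objective bounded below with infimum `f* = sInf (range f)`. -/
theorem stmt_2 {p : ℕ} {E : Fin p → Type*}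
    [∀ ℓ, NormedAddCommGroup (E ℓ)] [∀ ℓ, InnerProductSpace ℝ (E ℓ)]
    [∀ ℓ, FiniteDimensional ℝ (E ℓ)]
    (N : ∀ ℓ, Seminorm ℝ (E ℓ)) (hNdef : ∀ ℓ x, N ℓ x = 0 → x = 0)
    (f : PiLp 2 E → ℝ) (hf : Differentiable ℝ f)
    (hbdd : BddBelow (Set.range f))
    (L : Fin p → ℝ) (hL : ∀ ℓ, 0 ≤ L ℓ)
    (hsmooth : ∀ ℓ (X Y : PiLp 2 E),
      dualNorm (N ℓ) (gradient f X ℓ - gradient f Y ℓ) ≤ L ℓ * N ℓ (X ℓ - Y ℓ))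
    (T : ℕ)
    (X : ℕ → PiLp 2 E) (B O : ℕ → ∀ ℓ, E ℓ) (η : ℕ → Fin p → ℝ)
    (hη : ∀ t ℓ, 0 ≤ η t ℓ)
    (hO_ball : ∀ t, 1 ≤ t → t ≤ T → ∀ ℓ, N ℓ (O t ℓ) ≤ 1)
    (hO_lmo : ∀ t, 1 ≤ t → t ≤ T → ∀ ℓ, ⟪B t ℓ, O t ℓ⟫ = -dualNorm (N ℓ) (B t ℓ))
    (hupd : ∀ t, 1 ≤ t → t ≤ T → ∀ ℓ, X (t + 1) ℓ = X t ℓ + η t ℓ • O t ℓ) :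
    ∑ t ∈ Finset.Icc 1 T, ∑ ℓ, η t ℓ * dualNorm (N ℓ) (gradient f (X t) ℓ)
      ≤ f (X 1) - sInf (Set.range f)
        + ∑ t ∈ Finset.Icc 1 T, ∑ ℓ,
            (2 * η t ℓ * dualNorm (N ℓ) (B t ℓ - gradient f (X t) ℓ)
              + L ℓ / 2 * (η t ℓ) ^ 2) := by
  have hstep : ∀ t ∈ Finset.Icc 1 T,
      ∑ ℓ, η t ℓ * dualNorm (N ℓ) (gradient f (X t) ℓ) ≤ f (X t) - f (X (t + 1)) + ∑ ℓ,
        (2 * η t ℓ * dualNorm (N ℓ) (B t ℓ - gradient f (X t) ℓ) + L ℓ / 2 * η t ℓ ^ 2) := by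
    intro t ht
    obtain ⟨ht1, htT⟩ := Finset.mem_Icc.mp ht
    exact LayerwiseSmooth.lmo_step hNdef hsmooth hf hL (hη t) (hO_ball t ht1 htT)
      (hO_lmo t ht1 htT) (hupd t ht1 htT)
  have hinf : sInf (Set.range f) ≤ f (X (T + 1)) := csInf_le hbdd (Set.mem_range_self _)
  linarith [Finset.sum_Icc_le_sub_add_sum_of_le hstep]
end

section
/- Let E be a finite-dimensional real inner product space with Euclidean norm ‖·‖₂, and let ‖·‖ be a norm on E with dual norm ‖·‖_* and constants 0 < C₁ ≤ 1 ≤ C₂ such that C₁·‖A‖_* ≤ ‖A‖₂ ≤ C₂·‖A‖_* for all A ∈ E. On a filtered probability space, let (ε_t)_{t≥1} be E-valued with ε_t ℱ_t-measurable, 𝔼[ε_t | ℱ_{t−1}] = 0, and ‖ε_t‖_* ≤ σ̄ almost surely for every t. Fix β₁ ∈ [0,1), T ≥ 1, δ ∈ (0,1). Then with probability at least 1 − δ, for all 1 ≤ t ≤ T: ‖Σ_{τ=0}^{t−1} β₁^τ·ε_{t−τ}‖_* ≤ (4·C₂·σ̄/C₁)·√( log(2T/δ)/(1−β₁) ). 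-/
/-!
Pinelis' argument. If `‖D‖ ≤ c` then `‖x + D‖²` is affine in `⟪x, D⟫` and bounded by a convex
combination of `(‖x‖ ± c)²`, so convexity of `cosh ∘ √` bounds `cosh (λ ‖x + D‖)` by
`cosh (λ ‖x‖) cosh (λ c)` plus a multiple of `⟪x, D⟫`; for a martingale difference `D` the
latter has mean zero. Iterating along the martingale `S_t = ∑_{j<t} β₁^(t-1-j) ε_{j+1}` and using
`cosh x ≤ exp (x²/2)` gives `𝔼 cosh (λ ‖S_t‖) ≤ exp (λ² c² / (2 (1 - β₁)))`, hence a Gaussian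
tail for the Euclidean norm of the weighted sum. The norm comparison transfers it to the dual
norm, and a union bound over `t ≤ T` costs the factor `T` inside the logarithm.
-/

open MeasureTheory
open scoped RealInnerProductSpace

open Real Finset

lemma convexOn_cosh_sqrt : ConvexOn ℝ (Set.Ici 0) fun x : ℝ => cosh √x := by
  have hasSum_cosh_sqrt {z : ℝ} (hz : 0 ≤ z) :
      HasSum (fun n => z ^ n / (2 * n).factorial) (cosh √z) := by
    simpa only [pow_mul, sq_sqrt hz] using hasSum_cosh √z
  refine ⟨convex_Ici 0, fun x hx y hy a b ha hb hab => ?_⟩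
  -- `cosh √x = ∑ xⁿ / (2n)!` is a sum of convex functions.
  refine hasSum_le (fun n => ?_) (hasSum_cosh_sqrt (convex_Ici 0 hx hy ha hb hab))
    (((hasSum_cosh_sqrt hx).mul_left a).add ((hasSum_cosh_sqrt hy).mul_left b))
  have hpow := (convexOn_pow n).2 hx hy ha hb hab
  simp only [smul_eq_mul] at hpow ⊢
  calc (a * x + b * y) ^ n / (2 * n).factorial
      ≤ (a * x ^ n + b * y ^ n) / (2 * n).factorial := by gcongr
    _ = a * (x ^ n / (2 * n).factorial) + b * (y ^ n / (2 * n).factorial) := by ring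

lemma cosh_mul_le_cosh_mul (lam : ℝ) {a b : ℝ} (ha : 0 ≤ a) (hab : a ≤ b) :
    cosh (lam * a) ≤ cosh (lam * b) := by
  rw [cosh_le_cosh, abs_mul, abs_mul]
  gcongr

lemma cosh_mul_le_of_sq_le (lam : ℝ) {a c p u : ℝ} (ha : 0 ≤ a) (hc : 0 ≤ c)
    (hp : |p| ≤ a * c) (hu2 : u ^ 2 ≤ a ^ 2 + 2 * p + c ^ 2) :
    cosh (lam * u) ≤
      cosh (lam * a) * cosh (lam * c) + sinh (lam * a) * sinh (lam * c) / (a * c) * p := by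
  set q := p / (a * c)
  have hq : |q| ≤ 1 := by
    rw [abs_div, abs_of_nonneg (mul_nonneg ha hc)]
    exact div_le_one_of_le₀ hp (mul_nonneg ha hc)
  have hqp : q * (a * c) = p := div_mul_cancel_of_imp fun h => abs_nonpos_iff.1 (h ▸ hp)
  obtain ⟨hq₁, hq₂⟩ := abs_le.1 hq
  -- Write `u²` as (at most) a convex combination of `(a + c)²` and `(a - c)²`.
  set t := (1 + q) / 2 with ht
  have hsq : (lam * u) ^ 2 ≤ t * (lam * (a + c)) ^ 2 + (1 - t) * (lam * (a - c)) ^ 2 := by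
    have : t * (lam * (a + c)) ^ 2 + (1 - t) * (lam * (a - c)) ^ 2
        = lam ^ 2 * (a ^ 2 + 2 * (q * (a * c)) + c ^ 2) := by ring
    rw [this, hqp, mul_pow]
    gcongr
  calc cosh (lam * u) = cosh √((lam * u) ^ 2) := by rw [sqrt_sq_eq_abs, cosh_abs]
    _ ≤ cosh √(t * (lam * (a + c)) ^ 2 + (1 - t) * (lam * (a - c)) ^ 2) := by
      rw [cosh_le_cosh, abs_of_nonneg (sqrt_nonneg _), abs_of_nonneg (sqrt_nonneg _)]
      exact sqrt_le_sqrt hsq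
    _ ≤ t * cosh √((lam * (a + c)) ^ 2) + (1 - t) * cosh √((lam * (a - c)) ^ 2) :=
      convexOn_cosh_sqrt.2 (Set.mem_Ici.2 (sq_nonneg _)) (Set.mem_Ici.2 (sq_nonneg _))
        (by linarith) (by linarith) (by ring)
    _ = cosh (lam * a) * cosh (lam * c) + sinh (lam * a) * sinh (lam * c) / (a * c) * p := by
      rw [sqrt_sq_eq_abs, sqrt_sq_eq_abs, cosh_abs, cosh_abs, mul_add, mul_sub, cosh_add,
        cosh_sub]
      ring

lemma sum_range_pow_sq_le {β : ℝ} (hβ0 : 0 ≤ β) (hβ1 : β < 1) (n : ℕ) :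
    ∑ τ ∈ range n, (β ^ τ) ^ 2 ≤ 1 / (1 - β) :=
  calc ∑ τ ∈ range n, (β ^ τ) ^ 2 ≤ ∑ τ ∈ range n, β ^ τ :=
        sum_le_sum fun τ _ => by
          rw [sq]
          exact mul_le_of_le_one_left (by positivity) (pow_le_one₀ hβ0 hβ1.le)
    _ ≤ 1 / (1 - β) := by
        have := geom_sum_Ico_le_of_lt_one (m := 0) (n := n) hβ0 hβ1
        rwa [pow_zero, ← Finset.range_eq_Ico] at this

lemma log_two_mul_div_nonneg {T : ℕ} {δ : ℝ} (hT : 1 ≤ T) (hδ0 : 0 < δ) (hδ1 : δ < 1) :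
    0 ≤ log (2 * T / δ) := by
  have : (1 : ℝ) ≤ T := by exact_mod_cast hT
  exact log_nonneg (by rw [le_div_iff₀ hδ0]; linarith)

lemma two_mul_exp_neg_mul_log_le {k δ : ℝ} {T : ℕ} (hk : 1 ≤ k) (hT : 1 ≤ T) (hδ0 : 0 < δ)
    (hδ1 : δ < 1) : 2 * exp (-(k * log (2 * T / δ))) ≤ δ / T := by
  have hL := log_two_mul_div_nonneg hT hδ0 hδ1
  calc 2 * exp (-(k * log (2 * T / δ))) ≤ 2 * exp (-log (2 * T / δ)) := by
        gcongr
        nlinarith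
    _ = δ / T := by
        have : (0 : ℝ) < T := by exact_mod_cast hT
        rw [exp_neg, exp_log (by positivity)]
        field_simp

section

variable {Ω : Type*} {m m0 : MeasurableSpace Ω} {P : Measure Ω}

lemma ofReal_one_sub_le_measure [IsProbabilityMeasure P] {s : Set Ω} {δ : ℝ} (hδ : 0 ≤ δ)
    (h : P sᶜ ≤ ENNReal.ofReal δ) : ENNReal.ofReal (1 - δ) ≤ P s := by
  rw [ENNReal.ofReal_sub _ hδ, ENNReal.ofReal_one, tsub_le_iff_right]
  calc 1 = P Set.univ := measure_univ.symm
    _ ≤ P s + P sᶜ := measure_univ_le_add_compl s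
    _ ≤ P s + ENNReal.ofReal δ := by gcongr

lemma ofReal_one_sub_le_measure_forall [IsProbabilityMeasure P] {p : ℕ → Ω → Prop} {T : ℕ}
    {δ : ℝ} (hT : 1 ≤ T) (hδ : 0 ≤ δ)
    (h : ∀ t, 1 ≤ t → t ≤ T → P {ω | ¬ p t ω} ≤ ENNReal.ofReal (δ / T)) :
    ENNReal.ofReal (1 - δ) ≤ P {ω | ∀ t, 1 ≤ t → t ≤ T → p t ω} := by
  refine ofReal_one_sub_le_measure hδ ?_
  calc P {ω | ∀ t, 1 ≤ t → t ≤ T → p t ω}ᶜ ≤ P (⋃ t ∈ Icc 1 T, {ω | ¬ p t ω}) :=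
        measure_mono fun ω hω => by simpa [and_assoc] using hω
    _ ≤ ∑ t ∈ Icc 1 T, P {ω | ¬ p t ω} := measure_biUnion_finset_le _ _
    _ ≤ ∑ t ∈ Icc 1 T, ENNReal.ofReal (δ / T) :=
        sum_le_sum fun t ht => h t (mem_Icc.1 ht).1 (mem_Icc.1 ht).2
    _ = ENNReal.ofReal δ := by
        have : (T : ℝ) ≠ 0 := by norm_cast; omega
        rw [sum_const, Nat.card_Icc, Nat.add_sub_cancel, nsmul_eq_mul, ← ENNReal.ofReal_natCast,
          ← ENNReal.ofReal_mul (by positivity), mul_div_cancel₀ _ this]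

variable {E : Type*} [NormedAddCommGroup E]

lemma integrable_cosh_mul_norm [IsFiniteMeasure P] (lam : ℝ) {Y : Ω → E} {K : ℝ}
    (hY : AEStronglyMeasurable Y P) (hYK : ∀ᵐ ω ∂P, ‖Y ω‖ ≤ K) :
    Integrable (fun ω => cosh (lam * ‖Y ω‖)) P := by
  refine (integrable_const (cosh (lam * K))).mono'
    (continuous_cosh.comp_aestronglyMeasurable (hY.norm.const_mul lam)) ?_
  filter_upwards [hYK] with ω hω
  rw [norm_of_nonneg (cosh_pos _).le]
  exact cosh_mul_le_cosh_mul lam (norm_nonneg _) hω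

lemma ae_norm_sum_le {D : ℕ → Ω → E} {c : ℕ → ℝ} (hDc : ∀ j, ∀ᵐ ω ∂P, ‖D j ω‖ ≤ c j) (n : ℕ) :
    ∀ᵐ ω ∂P, ‖∑ j ∈ range n, D j ω‖ ≤ ∑ j ∈ range n, c j := by
  filter_upwards [ae_all_iff.2 hDc] with ω hω
  exact (norm_sum_le _ _).trans (sum_le_sum fun j _ => hω j)

lemma measure_le_norm_le_integral_cosh [IsFiniteMeasure P] {Y : Ω → E} {r : ℝ} (lam : ℝ)
    (hr : 0 ≤ r) (hint : Integrable (fun ω => cosh (lam * ‖Y ω‖)) P) :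
    P {ω | r ≤ ‖Y ω‖} ≤ ENNReal.ofReal ((∫ ω, cosh (lam * ‖Y ω‖) ∂P) / cosh (lam * r)) := by
  have hmarkov := mul_meas_ge_le_integral_of_nonneg
    (Filter.Eventually.of_forall fun ω => (cosh_pos _).le) hint (cosh (lam * r))
  calc P {ω | r ≤ ‖Y ω‖} ≤ P {ω | cosh (lam * r) ≤ cosh (lam * ‖Y ω‖)} :=
        measure_mono fun ω hω => cosh_mul_le_cosh_mul lam hr hω
    _ = ENNReal.ofReal (P.real {ω | cosh (lam * r) ≤ cosh (lam * ‖Y ω‖)}) :=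
        (ofReal_measureReal (measure_ne_top _ _)).symm
    _ ≤ ENNReal.ofReal ((∫ ω, cosh (lam * ‖Y ω‖) ∂P) / cosh (lam * r)) :=
        ENNReal.ofReal_le_ofReal ((le_div_iff₀' (cosh_pos _)).2 hmarkov)

lemma norm_div_norm_mul_smul_le [NormedSpace ℝ E] (x : E) {s c : ℝ} :
    ‖(s / (‖x‖ * c)) • x‖ ≤ |s| / |c| := by
  rw [norm_smul, norm_div, norm_mul, norm_norm, Real.norm_eq_abs, Real.norm_eq_abs]
  rcases (norm_nonneg x).eq_or_lt with h0 | hpos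
  · rw [← h0, mul_zero]
    positivity
  · exact le_of_eq (by field_simp)

variable [InnerProductSpace ℝ E]

lemma cosh_mul_norm_add_le (lam : ℝ) (x : E) {y : E} {c : ℝ} (hy : ‖y‖ ≤ c) :
    cosh (lam * ‖x + y‖) ≤ cosh (lam * ‖x‖) * cosh (lam * c) +
      sinh (lam * ‖x‖) * sinh (lam * c) / (‖x‖ * c) * ⟪x, y⟫ := by
  refine cosh_mul_le_of_sq_le lam (norm_nonneg x) ((norm_nonneg y).trans hy)
    ((abs_real_inner_le_norm x y).trans (by gcongr)) ?_
  rw [norm_add_sq_real]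
  gcongr

lemma integral_inner_eq_zero_of_condExp_eq_zero [CompleteSpace E] [IsFiniteMeasure P]
    (hm : m ≤ m0) {Z D : Ω → E} {C : ℝ} (hZ : StronglyMeasurable[m] Z)
    (hZC : ∀ᵐ ω ∂P, ‖Z ω‖ ≤ C) (hD : Integrable D P) (hDm : P[D | m] =ᵐ[P] 0) :
    ∫ ω, ⟪Z ω, D ω⟫ ∂P = 0 := by
  have hpull := condExp_stronglyMeasurable_bilin_of_bound (innerSL ℝ) hm hZ hD C hZC
  calc ∫ ω, ⟪Z ω, D ω⟫ ∂P = ∫ ω, (P[fun ω => innerSL ℝ (Z ω) (D ω) | m]) ω ∂P :=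
        (integral_condExp hm).symm
    _ = ∫ ω, innerSL ℝ (Z ω) ((P[D | m]) ω) ∂P := integral_congr_ae hpull
    _ = 0 := integral_eq_zero_of_ae (by filter_upwards [hDm] with ω hω; simp [hω])

lemma integral_cosh_mul_norm_add_le [CompleteSpace E] [IsFiniteMeasure P] (hm : m ≤ m0)
    (lam : ℝ) {X D : Ω → E} {K c : ℝ} (hX : StronglyMeasurable[m] X)
    (hXK : ∀ᵐ ω ∂P, ‖X ω‖ ≤ K) (hD : Integrable D P) (hDc : ∀ᵐ ω ∂P, ‖D ω‖ ≤ c)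
    (hDm : P[D | m] =ᵐ[P] 0) :
    ∫ ω, cosh (lam * ‖X ω + D ω‖) ∂P ≤ (∫ ω, cosh (lam * ‖X ω‖) ∂P) * cosh (lam * c) := by
  set Z : Ω → E := fun ω => (sinh (lam * ‖X ω‖) * sinh (lam * c) / (‖X ω‖ * c)) • X ω
  have hZ : StronglyMeasurable[m] Z := by
    have hnX := hX.norm.measurable
    exact (((measurable_sinh.comp (hnX.const_mul lam)).mul_const _).div
      (hnX.mul_const c)).stronglyMeasurable.smul hX
  obtain ⟨C, hZC⟩ : ∃ C, ∀ᵐ ω ∂P, ‖Z ω‖ ≤ C := by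
    refine ⟨sinh (|lam| * K) * |sinh (lam * c)| / |c|, ?_⟩
    filter_upwards [hXK] with ω hω
    have hsinh : |sinh (lam * ‖X ω‖)| ≤ sinh (|lam| * K) := by
      rw [abs_sinh, abs_mul, abs_norm, sinh_le_sinh]
      gcongr
    calc ‖Z ω‖ ≤ |sinh (lam * ‖X ω‖) * sinh (lam * c)| / |c| := norm_div_norm_mul_smul_le _
      _ ≤ sinh (|lam| * K) * |sinh (lam * c)| / |c| := by rw [abs_mul]; gcongr
  have hXD : ∀ᵐ ω ∂P, ‖X ω + D ω‖ ≤ K + c := by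
    filter_upwards [hXK, hDc] with ω h₁ h₂
    exact (norm_add_le _ _).trans (add_le_add h₁ h₂)
  have hXae : AEStronglyMeasurable X P := (hX.mono hm).aestronglyMeasurable
  have hcoshX := integrable_cosh_mul_norm lam hXae hXK
  have hinner : Integrable (fun ω => ⟪Z ω, D ω⟫) P := by
    refine (hD.norm.const_mul C).mono'
      ((hZ.mono hm).aestronglyMeasurable.inner hD.aestronglyMeasurable) ?_
    filter_upwards [hZC] with ω hω
    exact (norm_inner_le_norm _ _).trans (by gcongr)
  calc ∫ ω, cosh (lam * ‖X ω + D ω‖) ∂P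
      ≤ ∫ ω, (cosh (lam * ‖X ω‖) * cosh (lam * c) + ⟪Z ω, D ω⟫) ∂P := by
        refine integral_mono_ae
          (integrable_cosh_mul_norm lam (hXae.add hD.aestronglyMeasurable) hXD)
          ((hcoshX.mul_const _).add hinner) ?_
        filter_upwards [hDc] with ω hω
        simpa only [Z, real_inner_smul_left] using cosh_mul_norm_add_le lam (X ω) hω
    _ = (∫ ω, cosh (lam * ‖X ω‖) ∂P) * cosh (lam * c) := by
        rw [integral_add (hcoshX.mul_const _) hinner, integral_mul_const,
          integral_inner_eq_zero_of_condExp_eq_zero hm hZ hZC hD hDm, add_zero]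

lemma integral_cosh_mul_norm_sum_le [CompleteSpace E] [IsProbabilityMeasure P]
    (ℱ : Filtration ℕ m0) (lam : ℝ) {D : ℕ → Ω → E} {c : ℕ → ℝ}
    (hDm : ∀ j, StronglyMeasurable[ℱ (j + 1)] (D j)) (hDi : ∀ j, Integrable (D j) P)
    (hDc : ∀ j, ∀ᵐ ω ∂P, ‖D j ω‖ ≤ c j) (hDℱ : ∀ j, P[D j | ℱ j] =ᵐ[P] 0) (n : ℕ) :
    ∫ ω, cosh (lam * ‖∑ j ∈ range n, D j ω‖) ∂P ≤
      exp (lam ^ 2 * (∑ j ∈ range n, c j ^ 2) / 2) := by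
  induction n with
  | zero => simp
  | succ n ih =>
    have hSm : StronglyMeasurable[ℱ n] fun ω => ∑ j ∈ range n, D j ω :=
      Finset.stronglyMeasurable_fun_sum _ fun j hj => (hDm j).mono (ℱ.mono (mem_range.1 hj))
    calc ∫ ω, cosh (lam * ‖∑ j ∈ range (n + 1), D j ω‖) ∂P
        ≤ (∫ ω, cosh (lam * ‖∑ j ∈ range n, D j ω‖) ∂P) * cosh (lam * c n) := by
          simpa only [sum_range_succ] using integral_cosh_mul_norm_add_le (ℱ.le n) lam hSm
            (ae_norm_sum_le hDc n) (hDi n) (hDc n) (hDℱ n)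
      _ ≤ exp (lam ^ 2 * (∑ j ∈ range n, c j ^ 2) / 2) * exp ((lam * c n) ^ 2 / 2) :=
          mul_le_mul ih (cosh_le_exp_half_sq _) (cosh_pos _).le (exp_pos _).le
      _ = exp (lam ^ 2 * (∑ j ∈ range (n + 1), c j ^ 2) / 2) := by
          rw [← exp_add, sum_range_succ]
          ring_nf

/-- Azuma–Hoeffding inequality for martingales in a Hilbert space (Pinelis). -/
theorem measure_le_norm_sum_le [CompleteSpace E] [IsProbabilityMeasure P]
    (ℱ : Filtration ℕ m0) {D : ℕ → Ω → E} {c : ℕ → ℝ} {n : ℕ} {r V : ℝ}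
    (hDm : ∀ j, StronglyMeasurable[ℱ (j + 1)] (D j)) (hDi : ∀ j, Integrable (D j) P)
    (hDc : ∀ j, ∀ᵐ ω ∂P, ‖D j ω‖ ≤ c j) (hDℱ : ∀ j, P[D j | ℱ j] =ᵐ[P] 0)
    (hr : 0 ≤ r) (hV : 0 < V) (hcV : ∑ j ∈ range n, c j ^ 2 ≤ V) :
    P {ω | r ≤ ‖∑ j ∈ range n, D j ω‖} ≤ ENNReal.ofReal (2 * exp (-(r ^ 2 / (2 * V)))) := by
  set lam := r / V
  have hSm : StronglyMeasurable[ℱ n] fun ω => ∑ j ∈ range n, D j ω :=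
    Finset.stronglyMeasurable_fun_sum _ fun j hj => (hDm j).mono (ℱ.mono (mem_range.1 hj))
  have hint := integrable_cosh_mul_norm lam (hSm.mono (ℱ.le n)).aestronglyMeasurable
    (ae_norm_sum_le hDc n)
  refine (measure_le_norm_le_integral_cosh lam hr hint).trans (ENNReal.ofReal_le_ofReal ?_)
  have hexp_le_cosh : exp (lam * r) / 2 ≤ cosh (lam * r) := by
    rw [cosh_eq]
    linarith [exp_pos (-(lam * r))]
  calc (∫ ω, cosh (lam * ‖∑ j ∈ range n, D j ω‖) ∂P) / cosh (lam * r)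
      ≤ exp (lam ^ 2 * V / 2) / (exp (lam * r) / 2) := by
        gcongr
        exact (integral_cosh_mul_norm_sum_le ℱ lam hDm hDi hDc hDℱ n).trans
          (exp_le_exp.2 (by gcongr))
    _ = 2 * exp (-(r ^ 2 / (2 * V))) := by
        rw [div_div_eq_mul_div, mul_comm, mul_div_assoc, ← exp_sub]
        congr 2
        simp only [lam]
        field_simp
        ring

theorem measure_lt_norm_ema_le [CompleteSpace E] [IsProbabilityMeasure P]
    (ℱ : Filtration ℕ m0) {ε : ℕ → Ω → E} {β c a : ℝ} (hβ0 : 0 ≤ β) (hβ1 : β < 1)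
    (hc : 0 ≤ c) (ha : 0 ≤ a)
    (hmeas : ∀ t, 1 ≤ t → StronglyMeasurable[ℱ t] (ε t))
    (hint : ∀ t, 1 ≤ t → Integrable (ε t) P)
    (hcond : ∀ t, 1 ≤ t → P[ε t | ℱ (t - 1)] =ᵐ[P] 0)
    (hbd : ∀ t, 1 ≤ t → ∀ᵐ ω ∂P, ‖ε t ω‖ ≤ c) (t : ℕ) :
    P {ω | c * a < ‖∑ τ ∈ range t, β ^ τ • ε (t - τ) ω‖} ≤
      ENNReal.ofReal (2 * exp (-((1 - β) * a ^ 2 / 2))) := by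
  set D : ℕ → Ω → E := fun j => β ^ (t - 1 - j) • ε (j + 1)
  have hsum (ω : Ω) : ∑ τ ∈ range t, β ^ τ • ε (t - τ) ω = ∑ j ∈ range t, D j ω := by
    rw [← sum_range_reflect]
    refine sum_congr rfl fun j hj => ?_
    rw [show t - (t - 1 - j) = j + 1 by have := mem_range.1 hj; omega]
    rfl
  have hDm (j : ℕ) : StronglyMeasurable[ℱ (j + 1)] (D j) := (hmeas (j + 1) (by omega)).const_smul _
  have hDi (j : ℕ) : Integrable (D j) P := (hint (j + 1) (by omega)).smul _
  have hDc (j : ℕ) : ∀ᵐ ω ∂P, ‖D j ω‖ ≤ β ^ (t - 1 - j) * c := by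
    filter_upwards [hbd (j + 1) (by omega)] with ω hω
    simp only [D, Pi.smul_apply, norm_smul, norm_pow, norm_of_nonneg hβ0]
    gcongr
  have hDℱ (j : ℕ) : P[D j | ℱ j] =ᵐ[P] 0 := by
    filter_upwards [condExp_smul (μ := P) (β ^ (t - 1 - j)) (ε (j + 1)) (ℱ j),
      hcond (j + 1) (by omega)] with ω h₁ h₂
    rw [Nat.add_sub_cancel] at h₂
    simp [D, h₁, h₂]
  simp_rw [hsum]
  rcases hc.eq_or_lt with rfl | hcpos
  · have hnull : P {ω | 0 * a < ‖∑ j ∈ range t, D j ω‖} = 0 := by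
      rw [measure_eq_zero_iff_ae_notMem]
      filter_upwards [ae_norm_sum_le hDc t] with ω hω
      simpa using hω
    rw [hnull]
    positivity
  have hV : 0 < c ^ 2 / (1 - β) := div_pos (by positivity) (by linarith)
  have hcV : ∑ j ∈ range t, (β ^ (t - 1 - j) * c) ^ 2 ≤ c ^ 2 / (1 - β) :=
    calc ∑ j ∈ range t, (β ^ (t - 1 - j) * c) ^ 2 = c ^ 2 * ∑ τ ∈ range t, (β ^ τ) ^ 2 := by
          rw [← sum_range_reflect (fun τ => (β ^ τ) ^ 2) t, mul_sum]
          exact sum_congr rfl fun j _ => by ring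
      _ ≤ c ^ 2 * (1 / (1 - β)) := by gcongr; exact sum_range_pow_sq_le hβ0 hβ1 t
      _ = c ^ 2 / (1 - β) := by ring
  have hexponent : (c * a) ^ 2 / (2 * (c ^ 2 / (1 - β))) = (1 - β) * a ^ 2 / 2 := by
    field_simp
  rw [← hexponent]
  exact (measure_mono (Set.ofPred_subset_ofPred.2 fun _ => le_of_lt)).trans
    (measure_le_norm_sum_le ℱ hDm hDi hDc hDℱ (by positivity) hV hcV)

end

theorem stmt_10_general {Ω : Type*} {m0 : MeasurableSpace Ω} {P : Measure Ω} [IsProbabilityMeasure P]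
    {E : Type*} [NormedAddCommGroup E] [InnerProductSpace ℝ E] [FiniteDimensional ℝ E]
    (N : Seminorm ℝ E)
    (C₁ C₂ : ℝ) (hC₁0 : 0 < C₁) (hC₂ : 1 ≤ C₂)
    (hcomp : ∀ A : E, C₁ * dualNorm N A ≤ ‖A‖ ∧ ‖A‖ ≤ C₂ * dualNorm N A)
    (ℱ : Filtration ℕ m0)
    (ε : ℕ → Ω → E)
    (hmeas : ∀ t, 1 ≤ t → StronglyMeasurable[ℱ t] (ε t))
    (hint : ∀ t, 1 ≤ t → Integrable (ε t) P)
    (hcond : ∀ t, 1 ≤ t → P[ε t | ℱ (t - 1)] =ᵐ[P] 0)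
    (σbar : ℝ) (hσ : 0 ≤ σbar)
    (hbd : ∀ t, 1 ≤ t → ∀ᵐ ω ∂P, dualNorm N (ε t ω) ≤ σbar)
    (β₁ : ℝ) (hβ₁0 : 0 ≤ β₁) (hβ₁1 : β₁ < 1)
    (T : ℕ) (hT : 1 ≤ T) (δ : ℝ) (hδ : δ ∈ Set.Ioo (0 : ℝ) 1) :
    ENNReal.ofReal (1 - δ) ≤
      P {ω | ∀ t, 1 ≤ t → t ≤ T →
        dualNorm N (∑ τ ∈ Finset.range t, β₁ ^ τ • ε (t - τ) ω)
          ≤ 4 * C₂ * σbar / C₁ * Real.sqrt (Real.log (2 * T / δ) / (1 - β₁))} := by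
  obtain ⟨hδ0, hδ1⟩ := hδ
  have hε (t : ℕ) (ht : 1 ≤ t) : ∀ᵐ ω ∂P, ‖ε t ω‖ ≤ C₂ * σbar := by
    filter_upwards [hbd t ht] with ω hω
    exact (hcomp _).2.trans (by gcongr)
  set L := log (2 * T / δ)
  set a := 4 * √(L / (1 - β₁))
  have hexponent : (1 - β₁) * a ^ 2 / 2 = 8 * L := by
    have : 0 < 1 - β₁ := by linarith
    rw [mul_pow, sq_sqrt (div_nonneg (log_two_mul_div_nonneg hT hδ0 hδ1) this.le)]
    field_simp
    ring
  refine ofReal_one_sub_le_measure_forall hT hδ0.le fun t _ _ => ?_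
  have hbad : {ω | ¬ dualNorm N (∑ τ ∈ range t, β₁ ^ τ • ε (t - τ) ω) ≤
        4 * C₂ * σbar / C₁ * √(L / (1 - β₁))} ⊆
      {ω | C₂ * σbar * a < ‖∑ τ ∈ range t, β₁ ^ τ • ε (t - τ) ω‖} := fun ω hω =>
    calc C₂ * σbar * a = C₁ * (4 * C₂ * σbar / C₁ * √(L / (1 - β₁))) := by field_simp; ring
      _ < C₁ * dualNorm N (∑ τ ∈ range t, β₁ ^ τ • ε (t - τ) ω) := by gcongr; exact not_le.1 hω
      _ ≤ _ := (hcomp _).1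
  refine (measure_mono hbad).trans <| (measure_lt_norm_ema_le ℱ hβ₁0 hβ₁1 (by positivity)
    (by positivity) hmeas hint hcond hε t).trans (ENNReal.ofReal_le_ofReal ?_)
  rw [hexponent]
  exact two_mul_exp_neg_mul_log_le (by norm_num) hT hδ0 hδ1

/-- High-probability dual-norm bound for exponentially weighted sums of
bounded martingale-difference noise: with probability at least `1 - δ`, simultaneously for
all `1 ≤ t ≤ T`,
`‖∑_{τ<t} β₁^τ ε_{t-τ}‖_* ≤ (4 C₂ σ̄ / C₁) √(log(2T/δ)/(1-β₁))`. -/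
theorem stmt_10 {Ω : Type*} {m0 : MeasurableSpace Ω} {P : Measure Ω} [IsProbabilityMeasure P]
    {E : Type*} [NormedAddCommGroup E] [InnerProductSpace ℝ E] [FiniteDimensional ℝ E]
    (N : Seminorm ℝ E) (hNdef : ∀ x, N x = 0 → x = 0)
    (C₁ C₂ : ℝ) (hC₁0 : 0 < C₁) (hC₁1 : C₁ ≤ 1) (hC₂ : 1 ≤ C₂)
    (hcomp : ∀ A : E, C₁ * dualNorm N A ≤ ‖A‖ ∧ ‖A‖ ≤ C₂ * dualNorm N A)
    (ℱ : Filtration ℕ m0)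
    (ε : ℕ → Ω → E)
    (hmeas : ∀ t, 1 ≤ t → StronglyMeasurable[ℱ t] (ε t))
    (hint : ∀ t, 1 ≤ t → Integrable (ε t) P)
    (hcond : ∀ t, 1 ≤ t → P[ε t | ℱ (t - 1)] =ᵐ[P] 0)
    (σbar : ℝ) (hσ : 0 ≤ σbar)
    (hbd : ∀ t, 1 ≤ t → ∀ᵐ ω ∂P, dualNorm N (ε t ω) ≤ σbar)
    (β₁ : ℝ) (hβ₁0 : 0 ≤ β₁) (hβ₁1 : β₁ < 1)
    (T : ℕ) (hT : 1 ≤ T) (δ : ℝ) (hδ : δ ∈ Set.Ioo (0 : ℝ) 1) :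
    ENNReal.ofReal (1 - δ) ≤
      P {ω | ∀ t, 1 ≤ t → t ≤ T →
        dualNorm N (∑ τ ∈ Finset.range t, β₁ ^ τ • ε (t - τ) ω)
          ≤ 4 * C₂ * σbar / C₁ * Real.sqrt (Real.log (2 * T / δ) / (1 - β₁))} :=
  stmt_10_general N C₁ C₂ hC₁0 hC₂ hcomp ℱ ε hmeas hint hcond σbar hσ hbd β₁ hβ₁0 hβ₁1 T hT δ hδ
end
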